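/- For every polynomial P ∈ ℚ[x_0,…,x_N] and all x,a ∈ ℝ, the derivative with respect to x of the evaluated expression satisfies d/dx [P(K(x,a))] = −2·(D_{K1}P)(K(x,a)). -/

import Mathlib

/-!
With `B_x = ∑ C(x,k) zᵏ = (1 + z)ˣ`, the Kravchuk polynomial `K_n(x,a)` is the `n`-th coefficient
of `B_x(-z) · B_{a-x}(z)`. Coefficientwise `∂ₓ B_x = log(1 + z) · B_x`, since both sides solve
`(1 + z) Y' = x Y + B_x` with `Y(0) = 0`. Hence `∂ₓ` multiplies the Kravchuk series by
`log(1 - z) - log(1 + z) = -2 artanh z = -2 ∑_{i odd} zⁱ / i`, which is `-2 D_{K1}` on the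
generators `x_m`; both sides of the theorem are derivations along `P ↦ P(K(x,a))`, so they agree
on all of `ℚ[x_0,…,x_N]`.
-/

/-- Generalized binomial coefficient `C(t, k) = t(t-1)⋯(t-k+1)/k!` of a real number. -/
noncomputable def genBinom (t : ℝ) (k : ℕ) : ℝ :=
  (∏ j ∈ Finset.range k, (t - j)) / (Nat.factorial k)

/-- The binary Kravchuk polynomial `K_n(x,a) = ∑_{i=0}^n (-1)^i C(x,i) C(a-x, n-i)`. -/
noncomputable def K (n : ℕ) (x a : ℝ) : ℝ :=
  ∑ i ∈ Finset.range (n + 1), (-1 : ℝ) ^ i * genBinom x i * genBinom (a - x) (n - i)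

/-- The variable `x_i` of `ℚ[x_0,…,x_N]` (for `i ≤ N`). -/
noncomputable def Xv (N : ℕ) (i : ℕ) : MvPolynomial (Fin (N + 1)) ℚ :=
  if h : i ≤ N then MvPolynomial.X ⟨i, Nat.lt_succ_of_le h⟩ else 0

/-- The first Kravchuk derivation: `D_{K1}(x_0)=0`,
`D_{K1}(x_m)=∑_{i=1}^m ((1-(-1)^i)/(2i)) x_{m-i}`. -/
noncomputable def DK1 (N : ℕ) :
    Derivation ℚ (MvPolynomial (Fin (N + 1)) ℚ) (MvPolynomial (Fin (N + 1)) ℚ) :=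
  MvPolynomial.mkDerivation ℚ fun m : Fin (N + 1) =>
    ∑ i ∈ Finset.Icc 1 (m : ℕ),
      MvPolynomial.C ((1 - (-1 : ℚ) ^ i) / (2 * i)) * Xv N ((m : ℕ) - i)

open PowerSeries Finset

-- `ℝ⟦X⟧` carries no norm, so derivatives of series-valued functions are taken coefficientwise.
def HasCoeffDerivAt (f : ℝ → ℝ⟦X⟧) (f' : ℝ⟦X⟧) (x : ℝ) : Prop :=
  ∀ n, HasDerivAt (fun t => coeff n (f t)) (coeff n f') x

namespace HasCoeffDerivAt

variable {f g : ℝ → ℝ⟦X⟧} {f' g' : ℝ⟦X⟧} {x : ℝ}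

theorem mul (hf : HasCoeffDerivAt f f' x) (hg : HasCoeffDerivAt g g' x) :
    HasCoeffDerivAt (fun t => f t * g t) (f' * g x + f x * g') x := by
  intro n
  simp only [coeff_mul, map_add, ← sum_add_distrib]
  exact HasDerivAt.fun_sum fun p _ => (hf p.1).mul (hg p.2)

theorem rescale (c : ℝ) (hf : HasCoeffDerivAt f f' x) :
    HasCoeffDerivAt (fun t => PowerSeries.rescale c (f t)) (PowerSeries.rescale c f') x := by
  intro n
  simp only [coeff_rescale]
  exact (hf n).const_mul _

theorem comp {h : ℝ → ℝ} {h' : ℝ} (hf : HasCoeffDerivAt f f' (h x)) (hh : HasDerivAt h h' x) :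
    HasCoeffDerivAt (fun t => f (h t)) (h' • f') x := by
  intro n
  rw [coeff_smul, smul_eq_mul, mul_comm]
  exact (hf n).comp x hh

end HasCoeffDerivAt

theorem genBinom_succ (x : ℝ) (k : ℕ) :
    genBinom x (k + 1) * (k + 1) = genBinom x k * (x - k) := by
  rw [genBinom, genBinom, prod_range_succ, Nat.factorial_succ, Nat.cast_mul]
  field_simp
  push_cast
  ring

noncomputable def genBinomSeries (x : ℝ) : ℝ⟦X⟧ := mk (genBinom x)

@[simp]
theorem coeff_genBinomSeries (x : ℝ) (k : ℕ) : coeff k (genBinomSeries x) = genBinom x k :=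
  coeff_mk _ _

-- The `k = 0` coefficient is `(-1) / 0 = 0`.
noncomputable def logOneAdd : ℝ⟦X⟧ := mk fun k => (-1) ^ (k + 1) / k

theorem coeff_zero_logOneAdd_mul (f : ℝ⟦X⟧) : coeff 0 (logOneAdd * f) = 0 := by
  simp [logOneAdd]

theorem coeff_zero_one_add_X_mul (f : ℝ⟦X⟧) : coeff 0 ((1 + X) * f) = coeff 0 f := by
  rw [add_mul, one_mul, map_add, coeff_zero_X_mul, add_zero]

theorem coeff_succ_one_add_X_mul (f : ℝ⟦X⟧) (k : ℕ) :
    coeff (k + 1) ((1 + X) * f) = coeff (k + 1) f + coeff k f := by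
  rw [add_mul, one_mul, map_add, coeff_succ_X_mul]

theorem one_add_X_mul_derivative_logOneAdd : (1 + X) * d⁄dX ℝ logOneAdd = 1 := by
  ext (_ | k)
  · rw [coeff_zero_one_add_X_mul]
    simp [logOneAdd, coeff_derivative]
  · rw [coeff_succ_one_add_X_mul]
    simp only [logOneAdd, coeff_derivative, coeff_mk, coeff_one, Nat.add_one_ne_zero, if_false]
    push_cast
    field_simp
    ring

theorem one_add_X_mul_derivative_genBinomSeries (x : ℝ) :
    (1 + X) * d⁄dX ℝ (genBinomSeries x) = x • genBinomSeries x := by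
  ext (_ | k)
  · rw [coeff_zero_one_add_X_mul]
    simp [coeff_derivative, genBinom]
  · rw [coeff_succ_one_add_X_mul]
    simp only [coeff_derivative, coeff_genBinomSeries, coeff_smul, smul_eq_mul]
    have := genBinom_succ x (k + 1)
    push_cast at this ⊢
    linear_combination this

theorem one_add_X_mul_derivative_logOneAdd_mul_genBinomSeries (x : ℝ) :
    (1 + X) * d⁄dX ℝ (logOneAdd * genBinomSeries x)
      = genBinomSeries x + x • (logOneAdd * genBinomSeries x) := by
  rw [Derivation.leibniz, smul_eq_mul, smul_eq_mul, mul_add, mul_left_comm,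
    one_add_X_mul_derivative_genBinomSeries, mul_left_comm, one_add_X_mul_derivative_logOneAdd,
    mul_one, mul_smul_comm, add_comm]

theorem coeff_logOneAdd_mul_genBinomSeries_succ (x : ℝ) (k : ℕ) :
    coeff (k + 1) (logOneAdd * genBinomSeries x) * (k + 1)
      = coeff k (logOneAdd * genBinomSeries x) * (x - k) + genBinom x k := by
  have h := congrArg (coeff k) (one_add_X_mul_derivative_logOneAdd_mul_genBinomSeries x)
  rcases k with _ | k
  · rw [coeff_zero_one_add_X_mul] at h
    simp only [coeff_derivative, map_add, coeff_smul, smul_eq_mul, coeff_genBinomSeries] at h ⊢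
    rw [coeff_zero_logOneAdd_mul] at h ⊢
    push_cast at h ⊢
    linear_combination h
  · rw [coeff_succ_one_add_X_mul] at h
    simp only [coeff_derivative, map_add, coeff_smul, smul_eq_mul, coeff_genBinomSeries] at h ⊢
    push_cast at h ⊢
    linear_combination h

theorem hasDerivAt_genBinom (x : ℝ) (k : ℕ) :
    HasDerivAt (genBinom · k) (coeff k (logOneAdd * genBinomSeries x)) x := by
  induction k with
  | zero =>
    simpa [coeff_zero_logOneAdd_mul, genBinom] using hasDerivAt_const x (1 : ℝ)
  | succ k ih =>
    have hk : (k + 1 : ℝ) ≠ 0 := by positivity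
    have hrec : (genBinom · (k + 1)) = fun t => genBinom t k * (t - k) / (k + 1) := by
      funext t
      rw [eq_div_iff hk, genBinom_succ]
    rw [hrec, eq_div_of_mul_eq hk (coeff_logOneAdd_mul_genBinomSeries_succ x k)]
    simpa using (ih.mul ((hasDerivAt_id x).sub_const (k : ℝ))).div_const (k + 1 : ℝ)

theorem hasCoeffDerivAt_genBinomSeries (x : ℝ) :
    HasCoeffDerivAt genBinomSeries (logOneAdd * genBinomSeries x) x := by
  intro k
  simpa using hasDerivAt_genBinom x k

noncomputable def kravchukSeries (x a : ℝ) : ℝ⟦X⟧ :=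
  PowerSeries.rescale (-1) (genBinomSeries x) * genBinomSeries (a - x)

theorem coeff_kravchukSeries (n : ℕ) (x a : ℝ) : coeff n (kravchukSeries x a) = K n x a := by
  rw [kravchukSeries, coeff_mul, K,
    Nat.sum_antidiagonal_eq_sum_range_succ (fun i j => coeff i _ * coeff j _)]
  simp only [coeff_rescale, coeff_genBinomSeries, mul_assoc]

noncomputable def artanhSeries : ℝ⟦X⟧ := mk fun i => (1 - (-1) ^ i) / (2 * i)

theorem rescale_neg_one_logOneAdd_sub_logOneAdd :
    PowerSeries.rescale (-1) logOneAdd - logOneAdd = (-2 : ℝ) • artanhSeries := by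
  ext i
  simp only [map_sub, coeff_rescale, logOneAdd, artanhSeries, coeff_mk, coeff_smul, smul_eq_mul]
  rcases eq_or_ne i 0 with rfl | hi
  · simp
  · have h : ((-1 : ℝ) ^ i) ^ 2 = 1 := by rw [← pow_mul, pow_mul', neg_one_sq, one_pow]
    field_simp
    linear_combination -h

theorem hasCoeffDerivAt_kravchukSeries (x a : ℝ) :
    HasCoeffDerivAt (kravchukSeries · a) ((-2 : ℝ) • (artanhSeries * kravchukSeries x a)) x := by
  have hx := (hasCoeffDerivAt_genBinomSeries x).rescale (-1)
  have hax := (hasCoeffDerivAt_genBinomSeries (a - x)).comp ((hasDerivAt_id x).const_sub a)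
  convert hx.mul hax using 1
  · rfl
  rw [← smul_mul_assoc, ← rescale_neg_one_logOneAdd_sub_logOneAdd, kravchukSeries, map_mul]
  simp only [neg_smul, one_smul]
  ring

theorem coeff_artanhSeries_mul (f : ℝ⟦X⟧) (n : ℕ) :
    coeff n (artanhSeries * f) = ∑ i ∈ Icc 1 n, (1 - (-1) ^ i) / (2 * i) * coeff (n - i) f := by
  rw [coeff_mul, Nat.sum_antidiagonal_eq_sum_range_succ (fun i j => coeff i _ * coeff j f),
    range_eq_Ico, sum_eq_sum_Ico_succ_bot n.succ_pos]
  simp [artanhSeries]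
  rfl

theorem hasDerivAt_K (n : ℕ) (x a : ℝ) :
    HasDerivAt (K n · a) (-2 * ∑ i ∈ Icc 1 n, (1 - (-1) ^ i) / (2 * i) * K (n - i) x a) x := by
  simpa [coeff_kravchukSeries, coeff_artanhSeries_mul] using hasCoeffDerivAt_kravchukSeries x a n

theorem MvPolynomial.hasDerivAt_aeval_of_derivation {R σ 𝕜 : Type*} [CommSemiring R]
    [NontriviallyNormedField 𝕜] [Algebra R 𝕜]
    (D : Derivation R (MvPolynomial σ R) (MvPolynomial σ R)) {f : 𝕜 → σ → 𝕜} {x : 𝕜}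
    (hf : ∀ i, HasDerivAt (f · i) (aeval (f x) (D (X i))) x) (P : MvPolynomial σ R) :
    HasDerivAt (fun t => aeval (f t) P) (aeval (f x) (D P)) x := by
  induction P using MvPolynomial.induction_on with
  | C r =>
    rw [← algebraMap_eq, D.map_algebraMap, map_zero]
    simpa using hasDerivAt_const x (algebraMap R 𝕜 r)
  | add P Q hP hQ => simpa using hP.fun_add hQ
  | mul_X P i hP => simpa [D.leibniz, add_comm, mul_comm] using hP.fun_mul (hf i)

theorem aeval_K_DK1_X (N : ℕ) (m : Fin (N + 1)) (x a : ℝ) :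
    MvPolynomial.aeval (fun i : Fin (N + 1) => K i x a) (DK1 N (MvPolynomial.X m))
      = ∑ i ∈ Icc 1 (m : ℕ), (1 - (-1) ^ i) / (2 * i) * K (m - i) x a := by
  rw [DK1, MvPolynomial.mkDerivation_X, map_sum]
  refine sum_congr rfl fun i hi => ?_
  rw [Xv, dif_pos (by omega), map_mul, MvPolynomial.aeval_C, MvPolynomial.aeval_X]
  push_cast
  rfl

/-- `d/dx [P(K(x,a))] = -2 (D_{K1}P)(K(x,a))`. -/
theorem deriv_aeval_kravchuk_x (N : ℕ) (P : MvPolynomial (Fin (N + 1)) ℚ) (x a : ℝ) :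
    deriv (fun t : ℝ => MvPolynomial.aeval (fun i : Fin (N + 1) => K (i : ℕ) t a) P) x
      = -2 * MvPolynomial.aeval (fun i : Fin (N + 1) => K (i : ℕ) x a) (DK1 N P) := by
  have hK : ∀ m : Fin (N + 1), HasDerivAt (K m · a)
      (MvPolynomial.aeval (fun i : Fin (N + 1) => K i x a) (((-2 : ℚ) • DK1 N) (.X m))) x := by
    intro m
    simpa [aeval_K_DK1_X, Rat.smul_def] using hasDerivAt_K m x a
  simpa [Rat.smul_def] using (MvPolynomial.hasDerivAt_aeval_of_derivation _ hK P).deriv
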